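/- arXiv:2402.07833 — 2 statements merged into one kernel-verified Lean document; each statement's English description precedes it below -/
import Mathlib

section
/- For n odd and m odd, every tuple in (Z/mZ)^n is periodic under the Ducci map D, i.e., the Ducci map D is a bijection on (Z/mZ)^n (equivalently K((Z/mZ)^n) = (Z/mZ)^n). -/
/-- The Ducci map on `(ZMod m)^n`. -/
def ducci (m n : ℕ) [NeZero n] (v : Fin n → ZMod m) : Fin n → ZMod m :=
  fun i => v i + v (i + 1)

/-!
A tuple killed by the Ducci map alternates in sign, `w (i + 1) = -w i`; going once around a cycle
of odd length gives `w i = -w i`, so `w = 0` when `2` is invertible. Hence the additive map `ducci`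
is injective, thus bijective on the finite set `(ZMod m)^n`, and every point of a finite set is
periodic under an injective self-map.
-/

open Function Fin.NatCast

section AlternatingTuple

variable {G : Type*} [AddCommGroup G] {n : ℕ} [NeZero n] {w : Fin n → G}

theorem apply_add_natCast_eq_neg_one_pow_smul (h : ∀ i, w i + w (i + 1) = 0) (k : ℕ)
    (i : Fin n) : w (i + k) = (-1 : ℤ) ^ k • w i := by
  induction k with
  | zero => simp
  | succ k ih =>
    rw [Nat.cast_succ, ← add_assoc, eq_neg_of_add_eq_zero_right (h _), ih, pow_succ, mul_neg_one,
      neg_smul]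

theorem add_self_eq_zero_of_odd (h : ∀ i, w i + w (i + 1) = 0) (hn : Odd n) (i : Fin n) :
    w i + w i = 0 := by
  have hcycle := apply_add_natCast_eq_neg_one_pow_smul h n i
  rw [Fin.natCast_self, add_zero, hn.neg_one_pow, neg_one_smul] at hcycle
  exact add_eq_zero_iff_eq_neg.2 hcycle

end AlternatingTuple

def ducciHom (m n : ℕ) [NeZero n] : (Fin n → ZMod m) →+ (Fin n → ZMod m) :=
  AddMonoidHom.mk' (ducci m n) fun _ _ => funext fun _ => add_add_add_comm _ _ _ _

theorem ducci_injective {m n : ℕ} [NeZero n] (hn : Odd n) (hm : Odd m) :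
    Injective (ducci m n) := by
  refine (injective_iff_map_eq_zero (ducciHom m n)).2 fun w hw => funext fun i => ?_
  exact (ZMod.add_self_eq_zero_iff_eq_zero hm).1 (add_self_eq_zero_of_odd (congrFun hw) hn i)

theorem ducci_bijective_of_odd (m n : ℕ) [NeZero n] (hn : Odd n) (hm : Odd m) :
    Function.Bijective (ducci m n) ∧
      ∀ u : Fin n → ZMod m, ∃ t > 0, (ducci m n)^[t] u = u := by
  have : NeZero m := ⟨hm.pos.ne'⟩
  have hinj := ducci_injective hn hm
  exact ⟨Finite.injective_iff_bijective.1 hinj, hinj.mem_periodicPts⟩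
end

section
/- Let n = 3 and m = 2^l with l > 0. If u in (Z/mZ)^3 lies in a Ducci cycle, then D^2(u) = H(u), where H(x,y,z) = (y,z,x). -/
/-!
Two steps of the Ducci map give `D²(x, y, z) = (y, z, x) + (x + y + z)(1, 1, 1)`, so it suffices
that the coordinate sum `s` of a cyclic point vanishes. Each step of `D` doubles `s`, so a cycle of
length `t` gives `2ᵗ s = s`; since `2` is nilpotent modulo `2ˡ`, the element `2ᵗ - 1` is a unit and
`s = 0`.
-/

/-- The Ducci map on `(ZMod m)^3`. -/
def ducci3 (m : ℕ) : ZMod m × ZMod m × ZMod m → ZMod m × ZMod m × ZMod m :=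
  fun ⟨x, y, z⟩ => (x + y, y + z, z + x)

open Function

def coordSum {m : ℕ} (v : ZMod m × ZMod m × ZMod m) : ZMod m :=
  v.1 + v.2.1 + v.2.2

lemma coordSum_ducci3 (m : ℕ) (v : ZMod m × ZMod m × ZMod m) :
    coordSum (ducci3 m v) = 2 * coordSum v := by
  obtain ⟨x, y, z⟩ := v
  simp only [coordSum, ducci3]
  ring

lemma coordSum_iterate_ducci3 (m n : ℕ) (v : ZMod m × ZMod m × ZMod m) :
    coordSum ((ducci3 m)^[n] v) = 2 ^ n * coordSum v := by
  induction n with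
  | zero => simp
  | succ n ih => rw [iterate_succ_apply', coordSum_ducci3, ih, pow_succ', mul_assoc]

lemma iterate_two_ducci3 (m : ℕ) (v : ZMod m × ZMod m × ZMod m) :
    (ducci3 m)^[2] v = (v.2.1 + coordSum v, v.2.2 + coordSum v, v.1 + coordSum v) := by
  obtain ⟨x, y, z⟩ := v
  simp only [iterate_succ, iterate_zero, comp_apply, id_eq, ducci3, coordSum, Prod.mk.injEq]
  refine ⟨?_, ?_, ?_⟩ <;> ring

lemma eq_zero_of_isNilpotent_of_mul_eq_self {R : Type*} [Ring R] {a x : R}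
    (ha : IsNilpotent a) (h : a * x = x) : x = 0 :=
  ha.isUnit_sub_one.mul_right_eq_zero.mp (by rw [sub_mul, one_mul, h, sub_self])

lemma isNilpotent_two_zmod_two_pow (l : ℕ) : IsNilpotent (2 : ZMod (2 ^ l)) :=
  ⟨l, by exact_mod_cast ZMod.natCast_self (2 ^ l)⟩

lemma coordSum_eq_zero_of_isPeriodicPt {l t : ℕ} (ht : 0 < t)
    {u : ZMod (2 ^ l) × ZMod (2 ^ l) × ZMod (2 ^ l)} (hu : IsPeriodicPt (ducci3 (2 ^ l)) t u) :
    coordSum u = 0 :=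
  eq_zero_of_isNilpotent_of_mul_eq_self ((isNilpotent_two_zmod_two_pow l).pow_of_pos ht.ne') <| by
    rw [← coordSum_iterate_ducci3, hu.eq]

theorem ducci_sq_eq_shift_on_cycle_general (l : ℕ)
    (u : ZMod (2 ^ l) × ZMod (2 ^ l) × ZMod (2 ^ l))
    (hu : ∃ t > 0, (ducci3 (2 ^ l))^[t] u = u) :
    (ducci3 (2 ^ l))^[2] u = (u.2.1, u.2.2, u.1) := by
  obtain ⟨t, ht, hperiodic⟩ := hu
  simp [iterate_two_ducci3, coordSum_eq_zero_of_isPeriodicPt ht hperiodic]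

theorem ducci_sq_eq_shift_on_cycle (l : ℕ) (hl : 0 < l)
    (u : ZMod (2 ^ l) × ZMod (2 ^ l) × ZMod (2 ^ l))
    (hu : ∃ t > 0, (ducci3 (2 ^ l))^[t] u = u) :
    (ducci3 (2 ^ l))^[2] u = (u.2.1, u.2.2, u.1) :=
  ducci_sq_eq_shift_on_cycle_general l u hu
end
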